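/- If ζ : Σ → 2^{SP(Δ)} is an atomic substitution, then for every sp-pomset U ∈ SP(Δ) there exists at most one word w ∈ Σ* such that U ∈ ζ(w). -/

import Mathlib

namespace WBKA

/-- Series-parallel terms over an alphabet `A`. -/
inductive SPTerm (A : Type) : Type
  | one : SPTerm A
  | atom : A → SPTerm A
  | seq : SPTerm A → SPTerm A → SPTerm A
  | par : SPTerm A → SPTerm A → SPTerm A

/-- The congruence generated by the series-parallel pomset axioms:
associativity of both compositions, commutativity of parallel composition,
and the empty pomset acting as unit for both. -/
inductive SPEquiv {A : Type} : SPTerm A → SPTerm A → Prop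
  | refl (u : SPTerm A) : SPEquiv u u
  | symm {u v : SPTerm A} : SPEquiv u v → SPEquiv v u
  | trans {u v w : SPTerm A} : SPEquiv u v → SPEquiv v w → SPEquiv u w
  | seqCongr {u u' v v' : SPTerm A} :
      SPEquiv u u' → SPEquiv v v' → SPEquiv (u.seq v) (u'.seq v')
  | parCongr {u u' v v' : SPTerm A} :
      SPEquiv u u' → SPEquiv v v' → SPEquiv (u.par v) (u'.par v')
  | seqAssoc (u v w : SPTerm A) : SPEquiv ((u.seq v).seq w) (u.seq (v.seq w))
  | parAssoc (u v w : SPTerm A) : SPEquiv ((u.par v).par w) (u.par (v.par w))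
  | parComm (u v : SPTerm A) : SPEquiv (u.par v) (v.par u)
  | seqOneLeft (u : SPTerm A) : SPEquiv (SPTerm.one.seq u) u
  | seqOneRight (u : SPTerm A) : SPEquiv (u.seq SPTerm.one) u
  | parOne (u : SPTerm A) : SPEquiv (u.par SPTerm.one) u

instance spSetoid (A : Type) : Setoid (SPTerm A) :=
  ⟨SPEquiv, SPEquiv.refl, SPEquiv.symm, SPEquiv.trans⟩

/-- Series-parallel pomsets over `A`, as the free algebra on the sp-pomset axioms. -/
def Pomset (A : Type) : Type := Quotient (spSetoid A)

namespace Pomset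

variable {A : Type}

def mk (u : SPTerm A) : Pomset A := Quotient.mk (spSetoid A) u

/-- The empty pomset `1`. -/
def eps : Pomset A := mk SPTerm.one

/-- The primitive pomset consisting of a single event labelled `a`. -/
def atom (a : A) : Pomset A := mk (SPTerm.atom a)

/-- Sequential composition of pomsets. -/
def seq : Pomset A → Pomset A → Pomset A :=
  Quotient.lift₂ (fun u v => mk (u.seq v))
    (fun _ _ _ _ hu hv => Quotient.sound (SPEquiv.seqCongr hu hv))

/-- Parallel composition of pomsets. -/
def par : Pomset A → Pomset A → Pomset A :=
  Quotient.lift₂ (fun u v => mk (u.par v))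
    (fun _ _ _ _ hu hv => Quotient.sound (SPEquiv.parCongr hu hv))

/-- `U` is the empty pomset. -/
def IsEmptyP (U : Pomset A) : Prop := U = eps

/-- `U` is primitive: it consists of a single labelled event. -/
def Primitive (U : Pomset A) : Prop := ∃ a : A, U = atom a

/-- `U` is sequential: a sequential composition of two non-empty pomsets. -/
def Sequential (U : Pomset A) : Prop :=
  ∃ V W : Pomset A, V ≠ eps ∧ W ≠ eps ∧ U = seq V W

/-- `U` is parallel: a parallel composition of two non-empty pomsets. -/
def Parallel (U : Pomset A) : Prop :=
  ∃ V W : Pomset A, V ≠ eps ∧ W ≠ eps ∧ U = par V W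

/-- `U` is a sequential prime. -/
def SeqPrime (U : Pomset A) : Prop :=
  U ≠ eps ∧ ∀ V W : Pomset A, U = seq V W → V = eps ∨ W = eps

/-- `U` is a parallel prime. -/
def ParPrime (U : Pomset A) : Prop :=
  U ≠ eps ∧ ∀ V W : Pomset A, U = par V W → V = eps ∨ W = eps

/-- Sequential product of a list of pomsets. -/
def seqProd (l : List (Pomset A)) : Pomset A := l.foldr seq eps

/-- Parallel product of a list of pomsets. -/
def parProd (l : List (Pomset A)) : Pomset A := l.foldr par eps

end Pomset

/-- Pointwise sequential composition of pomset languages. -/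
def langSeq {A : Type} (L M : Set (Pomset A)) : Set (Pomset A) :=
  Set.image2 Pomset.seq L M

/-- Pointwise parallel composition of pomset languages. -/
def langPar {A : Type} (L M : Set (Pomset A)) : Set (Pomset A) :=
  Set.image2 Pomset.par L M

/-- `n`-fold sequential power of a language. -/
def langPow {A : Type} (L : Set (Pomset A)) : ℕ → Set (Pomset A)
  | 0 => {Pomset.eps}
  | n + 1 => langSeq L (langPow L n)

/-- Kleene closure of a pomset language. -/
def langStar {A : Type} (L : Set (Pomset A)) : Set (Pomset A) :=
  ⋃ n : ℕ, langPow L n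

/-- Series-rational expressions over `A`. -/
inductive SR (A : Type) : Type
  | zero : SR A
  | one : SR A
  | atom : A → SR A
  | plus : SR A → SR A → SR A
  | seq : SR A → SR A → SR A
  | par : SR A → SR A → SR A
  | star : SR A → SR A

/-- The sp-language semantics of series-rational expressions. -/
def sem {A : Type} : SR A → Set (Pomset A)
  | .zero => ∅
  | .one => {Pomset.eps}
  | .atom a => {Pomset.atom a}
  | .plus e f => sem e ∪ sem f
  | .seq e f => langSeq (sem e) (sem f)
  | .par e f => langPar (sem e) (sem f)
  | .star e => langStar (sem e)

/-- The syntactic predicate `F` characterising acceptance of the empty pomset. -/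
inductive EF {A : Type} : SR A → Prop
  | one : EF SR.one
  | plusLeft {e : SR A} (f : SR A) : EF e → EF (SR.plus e f)
  | plusRight (e : SR A) {f : SR A} : EF f → EF (SR.plus e f)
  | seq {e f : SR A} : EF e → EF f → EF (SR.seq e f)
  | par {e f : SR A} : EF e → EF f → EF (SR.par e f)
  | star (e : SR A) : EF (SR.star e)

/-- Pomset automata. -/
structure PA (A : Type) (Q : Type) where
  acc : Set Q
  δ : Q → A → Set Q
  γ : Q → Multiset Q → Set Q

/-- The run relation of a pomset automaton. -/
inductive Run {A Q : Type} (M : PA A Q) : Q → Pomset A → Q → Prop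
  | triv (q : Q) : Run M q Pomset.eps q
  | seqUnit {q : Q} {a : A} {q' : Q} :
      q' ∈ M.δ q a → Run M q (Pomset.atom a) q'
  | comp {q : Q} {U : Pomset A} {q'' : Q} {V : Pomset A} {q' : Q} :
      Run M q U q'' → Run M q'' V q' → Run M q (U.seq V) q'
  | parUnit {q q' : Q} (l : List (Q × Pomset A × Q)) :
      q' ∈ M.γ q (↑(l.map Prod.fst) : Multiset Q) →
      (∀ x ∈ l, x.2.2 ∈ M.acc) →
      (∀ x ∈ l, Run M x.1 x.2.1 x.2.2) →
      Run M q (Pomset.parProd (l.map fun x => x.2.1)) q'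

/-- Language of a state of a pomset automaton. -/
def PA.lang {A Q : Type} (M : PA A Q) (q : Q) : Set (Pomset A) :=
  {U | ∃ q' ∈ M.acc, Run M q U q'}

/-- The triple `q →^U q'` matches the trivial-run rule. -/
def TrivialRun {A Q : Type} (_M : PA A Q) (q : Q) (U : Pomset A) (q' : Q) : Prop :=
  U = Pomset.eps ∧ q = q'

/-- `q →^U q'` is a sequential unit run. -/
def SeqUnitRun {A Q : Type} (M : PA A Q) (q : Q) (U : Pomset A) (q' : Q) : Prop :=
  ∃ a : A, U = Pomset.atom a ∧ q' ∈ M.δ q a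

/-- `q →^U q'` is a parallel unit run. -/
def ParUnitRun {A Q : Type} (M : PA A Q) (q : Q) (U : Pomset A) (q' : Q) : Prop :=
  ∃ l : List (Q × Pomset A × Q),
    q' ∈ M.γ q (↑(l.map Prod.fst) : Multiset Q) ∧
    (∀ x ∈ l, x.2.2 ∈ M.acc ∧ Run M x.1 x.2.1 x.2.2) ∧
    U = Pomset.parProd (l.map fun x => x.2.1)

/-- `q →^U q'` is a unit run: a sequential or a parallel unit run. -/
def UnitRun {A Q : Type} (M : PA A Q) (q : Q) (U : Pomset A) (q' : Q) : Prop :=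
  SeqUnitRun M q U q' ∨ ParUnitRun M q U q'

/-- `q →^U q'` is a composite run: a sequential composition of two non-trivial runs. -/
def CompositeRun {A Q : Type} (M : PA A Q) (q : Q) (U : Pomset A) (q' : Q) : Prop :=
  ∃ (V W : Pomset A) (q'' : Q),
    U = V.seq W ∧ Run M q V q'' ∧ Run M q'' W q' ∧
    ¬ TrivialRun M q V q'' ∧ ¬ TrivialRun M q'' W q'

/-- The support preorder: `Supports M q' q` means `q' ⪯ q`. -/
inductive Supports {A Q : Type} (M : PA A Q) : Q → Q → Prop
  | refl (q : Q) : Supports M q q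
  | trans {q r p : Q} : Supports M q r → Supports M r p → Supports M q p
  | deltaStep {q : Q} {a : A} {q' : Q} : q' ∈ M.δ q a → Supports M q' q
  | gammaStep {q : Q} {φ : Multiset Q} {q' : Q} : q' ∈ M.γ q φ → Supports M q' q
  | forkStep {q : Q} {φ : Multiset Q} {r : Q} :
      r ∈ φ → (M.γ q φ).Nonempty → Supports M r q

/-- A pomset automaton is fork-acyclic when every fork target `r` of `q`
satisfies `r ≺ q`, i.e. `q ⋠ r`. -/
def ForkAcyclic {A Q : Type} (M : PA A Q) : Prop :=
  ∀ (q : Q) (φ : Multiset Q) (r : Q),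
    r ∈ φ → (M.γ q φ).Nonempty → ¬ Supports M q r

/-- A set of states is support-closed. -/
def SupportClosed {A Q : Type} (M : PA A Q) (S : Set Q) : Prop :=
  ∀ q ∈ S, ∀ q' : Q, Supports M q' q → q' ∈ S

/-- Restriction of a pomset automaton to a set of states. -/
def PA.restrict {A Q : Type} (M : PA A Q) (S : Set Q) : PA A {q : Q // q ∈ S} where
  acc := {q | q.val ∈ M.acc}
  δ := fun q a => {r | r.val ∈ M.δ q.val a}
  γ := fun q φ => {r | r.val ∈ M.γ q.val (φ.map Subtype.val)}

/-- `n`-forking automata. -/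
def NForking {A Q : Type} (M : PA A Q) (n : ℕ) : Prop :=
  ∀ (q : Q) (φ : Multiset Q), (M.γ q φ).Nonempty → n ≤ Multiset.card φ

/-- Parsimonious automata: no fork target accepts the empty pomset. -/
def Parsimonious {A Q : Type} (M : PA A Q) : Prop :=
  ∀ (p : Q) (φ : Multiset Q) (q : Q),
    q ∈ φ → (M.γ p φ).Nonempty → Pomset.eps ∉ M.lang q

/-- Flat-branching automata: forks from fork targets never reach accepting states. -/
def FlatBranching {A Q : Type} (M : PA A Q) : Prop :=
  ∀ (p : Q) (φ : Multiset Q) (q : Q),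
    q ∈ φ → (M.γ p φ).Nonempty → ∀ ψ : Multiset Q, M.γ q ψ ∩ M.acc = ∅

/-- Well-structured pomset automata. -/
def WellStructured {A Q : Type} (M : PA A Q) : Prop :=
  (∀ (q : Q) (φ : Multiset Q), (M.γ q φ).Nonempty → 2 ≤ Multiset.card φ) ∧
  ∀ (p : Q) (φ : Multiset Q) (q : Q), q ∈ φ → (M.γ p φ).Nonempty →
    q ∉ M.acc ∧ ∀ ψ : Multiset Q, M.γ q ψ ∩ M.acc = ∅

/-- The relation `⇝` characterising runs labelled by the empty pomset. -/
inductive Leadsto {A Q : Type} (M : PA A Q) : Q → Q → Prop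
  | refl (p : Q) : Leadsto M p p
  | trans {p r q : Q} : Leadsto M p r → Leadsto M r q → Leadsto M p q
  | fork {p q : Q} (l : List (Q × Q)) :
      q ∈ M.γ p (↑(l.map Prod.fst) : Multiset Q) →
      (∀ x ∈ l, x.2 ∈ M.acc) →
      (∀ x ∈ l, Leadsto M x.1 x.2) →
      Leadsto M p q

/-- Concatenate each expression of a set with `f` on the right. -/
def seqAfter {A : Type} (T : Set (SR A)) (f : SR A) : Set (SR A) :=
  (fun g => SR.seq g f) '' T

/-- Antimirov-style sequential derivatives of sr-expressions. -/
def deltaS {A : Type} : SR A → A → Set (SR A)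
  | .zero, _ => ∅
  | .one, _ => ∅
  | .atom b, a => {g | g = SR.one ∧ a = b}
  | .plus e f, a => deltaS e a ∪ deltaS f a
  | .seq e f, a => seqAfter (deltaS e a) f ∪ {g | g ∈ deltaS f a ∧ EF e}
  | .par _ _, _ => ∅
  | .star e, a => seqAfter (deltaS e a) (SR.star e)

/-- Antimirov-style parallel derivatives of sr-expressions. -/
def gammaS {A : Type} : SR A → Multiset (SR A) → Set (SR A)
  | .zero, _ => ∅
  | .one, _ => ∅
  | .atom _, _ => ∅
  | .plus e f, φ => gammaS e φ ∪ gammaS f φ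
  | .seq e f, φ => seqAfter (gammaS e φ) f ∪ {g | g ∈ gammaS f φ ∧ EF e}
  | .par e f, φ => {g | g = SR.one ∧ φ = {e, f}}
  | .star e, φ => seqAfter (gammaS e φ) (SR.star e)

/-- The syntactic pomset automaton on sr-expressions. -/
def synPA (A : Type) : PA A (SR A) where
  acc := {e | EF e}
  δ := deltaS
  γ := gammaS

/-- The parallel-nesting depth of an sr-expression. -/
def pdepth {A : Type} : SR A → ℕ
  | .zero => 0
  | .one => 0
  | .atom _ => 0
  | .plus e f => max (pdepth e) (pdepth f)
  | .seq e f => max (pdepth e) (pdepth f)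
  | .par e f => max (pdepth e) (pdepth f) + 1
  | .star e => pdepth e

/-- A substitution `ζ : Σ → 2^{SP(Δ)}` is atomic. -/
def Atomic {A B : Type} (ζ : A → Set (Pomset B)) : Prop :=
  (∀ a : A, ∀ U ∈ ζ a, Pomset.SeqPrime U) ∧
  (∀ a b : A, (ζ a ∩ ζ b).Nonempty ↔ a = b)

/-- Extension of a substitution to words. -/
def substWord {A B : Type} (ζ : A → Set (Pomset B)) : List A → Set (Pomset B)
  | [] => {Pomset.eps}
  | a :: w => langSeq (ζ a) (substWord ζ w)

/-- Extension of a substitution to word languages. -/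
def substLang {A B : Type} (ζ : A → Set (Pomset B)) (L : Set (List A)) :
    Set (Pomset B) :=
  ⋃ w ∈ L, substWord ζ w

/-- `L_A(α)` for a set `α` of states: the atom language of `α`. -/
def atomLang {Q U : Type} (LA : Q → Set U) (α : Set Q) : Set U :=
  (⋂ q ∈ α, LA q) \ (⋃ (q : Q) (_ : q ∉ α), LA q)

/-!
Reading a term from left to right, flattening sequential compositions and keeping a parallel
composition of two non-empty parts as a single factor, gives the list of sequential prime factors
of the pomset it denotes; this list is invariant under the sp-axioms, hence unique. If
`U ∈ ζ(a₁⋯aₙ)` then `U = V₁⋯Vₙ` with each `Vᵢ ∈ ζ(aᵢ)` a sequential prime, so the factor list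
of `U` is exactly `V₁, …, Vₙ`, and each `Vᵢ` determines `aᵢ` because the languages `ζ(a)` are
pairwise disjoint.
-/

namespace Pomset

variable {B : Type}

theorem mk_eq_mk {u v : SPTerm B} (h : SPEquiv u v) : mk u = mk v :=
  Quotient.sound h

@[simp] theorem mk_seq (u v : SPTerm B) : mk (u.seq v) = (mk u).seq (mk v) := rfl

@[simp] theorem mk_par (u v : SPTerm B) : mk (u.par v) = (mk u).par (mk v) := rfl

@[simp] theorem seq_eps (U : Pomset B) : U.seq eps = U := by
  induction U using Quotient.inductionOn
  exact mk_eq_mk (.seqOneRight _)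

@[simp] theorem eps_seq (U : Pomset B) : eps.seq U = U := by
  induction U using Quotient.inductionOn
  exact mk_eq_mk (.seqOneLeft _)

theorem seq_assoc (U V W : Pomset B) : (U.seq V).seq W = U.seq (V.seq W) := by
  induction U using Quotient.inductionOn
  induction V using Quotient.inductionOn
  induction W using Quotient.inductionOn
  exact mk_eq_mk (.seqAssoc _ _ _)

theorem par_comm (U V : Pomset B) : U.par V = V.par U := by
  induction U using Quotient.inductionOn
  induction V using Quotient.inductionOn
  exact mk_eq_mk (.parComm _ _)

theorem par_assoc (U V W : Pomset B) : (U.par V).par W = U.par (V.par W) := by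
  induction U using Quotient.inductionOn
  induction V using Quotient.inductionOn
  induction W using Quotient.inductionOn
  exact mk_eq_mk (.parAssoc _ _ _)

@[simp] theorem par_eps (U : Pomset B) : U.par eps = U := by
  induction U using Quotient.inductionOn
  exact mk_eq_mk (.parOne _)

@[simp] theorem eps_par (U : Pomset B) : eps.par U = U := by
  rw [par_comm, par_eps]

@[simp] theorem seqProd_nil : seqProd ([] : List (Pomset B)) = eps := rfl

@[simp] theorem seqProd_cons (X : Pomset B) (l : List (Pomset B)) :
    seqProd (X :: l) = X.seq (seqProd l) := rfl

theorem seqProd_append (l₁ l₂ : List (Pomset B)) :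
    seqProd (l₁ ++ l₂) = (seqProd l₁).seq (seqProd l₂) := by
  induction l₁ with
  | nil => simp
  | cons X l ih => simp [ih, seq_assoc]

end Pomset

namespace SPTerm

variable {B : Type}

def seqFactors : SPTerm B → List (Pomset B)
  | one => []
  | atom a => [Pomset.atom a]
  | seq u v => u.seqFactors ++ v.seqFactors
  | par u v =>
      match u.seqFactors, v.seqFactors with
      | [], l => l
      | l, [] => l
      | _, _ => [(Pomset.mk u).par (Pomset.mk v)]

variable {u v : SPTerm B}

@[simp] theorem seqFactors_par_of_left_eq_nil (hu : u.seqFactors = []) :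
    (u.par v).seqFactors = v.seqFactors := by
  simp [seqFactors, hu]

@[simp] theorem seqFactors_par_of_right_eq_nil (hv : v.seqFactors = []) :
    (u.par v).seqFactors = u.seqFactors := by
  rcases hu : u.seqFactors <;> simp [seqFactors, hu, hv]

@[simp] theorem seqFactors_par_of_ne_nil (hu : u.seqFactors ≠ []) (hv : v.seqFactors ≠ []) :
    (u.par v).seqFactors = [(Pomset.mk u).par (Pomset.mk v)] := by
  rcases hu' : u.seqFactors <;> rcases hv' : v.seqFactors <;> simp_all [seqFactors]

theorem mk_eq_eps_of_seqFactors_eq_nil :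
    ∀ {u : SPTerm B}, u.seqFactors = [] → Pomset.mk u = .eps
  | one, _ => rfl
  | seq u v, h => by
    obtain ⟨hu, hv⟩ := List.append_eq_nil_iff.mp h
    rw [Pomset.mk_seq, mk_eq_eps_of_seqFactors_eq_nil hu, mk_eq_eps_of_seqFactors_eq_nil hv,
      Pomset.eps_seq]
  | par u v, h => by
    rw [Pomset.mk_par]
    by_cases hu : u.seqFactors = []
    · simp only [seqFactors_par_of_left_eq_nil hu] at h
      simp [mk_eq_eps_of_seqFactors_eq_nil hu, mk_eq_eps_of_seqFactors_eq_nil h]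
    by_cases hv : v.seqFactors = []
    · exact absurd ((seqFactors_par_of_right_eq_nil hv).symm.trans h) hu
    · simp [seqFactors_par_of_ne_nil hu hv] at h

theorem seqFactors_eq_of_equiv (h : SPEquiv u v) : u.seqFactors = v.seqFactors := by
  induction h with
  | refl => rfl
  | symm _ ih => exact ih.symm
  | trans _ _ ih₁ ih₂ => exact ih₁.trans ih₂
  | seqCongr _ _ ih₁ ih₂ => simp only [seqFactors, ih₁, ih₂]
  | parCongr hu hv ih₁ ih₂ =>
    simp only [seqFactors, ih₁, ih₂, Pomset.mk_eq_mk hu, Pomset.mk_eq_mk hv]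
  | seqAssoc => simp [seqFactors]
  | parAssoc u v w =>
    by_cases hu : u.seqFactors = [] <;> by_cases hv : v.seqFactors = [] <;>
      by_cases hw : w.seqFactors = [] <;>
      simp [hu, hv, hw, mk_eq_eps_of_seqFactors_eq_nil, Pomset.par_assoc]
  | parComm u v =>
    by_cases hu : u.seqFactors = [] <;> by_cases hv : v.seqFactors = [] <;>
      simp [hu, hv, Pomset.par_comm (Pomset.mk u)]
  | seqOneLeft | seqOneRight => simp [seqFactors]
  | parOne => exact seqFactors_par_of_right_eq_nil rfl

end SPTerm

namespace Pomset

variable {B : Type}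

def seqFactors : Pomset B → List (Pomset B) :=
  Quotient.lift SPTerm.seqFactors fun _ _ => SPTerm.seqFactors_eq_of_equiv

@[simp] theorem seqFactors_mk (u : SPTerm B) : (mk u).seqFactors = u.seqFactors := rfl

end Pomset

namespace SPTerm

variable {B : Type}

theorem seqProd_seqFactors : ∀ u : SPTerm B, Pomset.seqProd u.seqFactors = Pomset.mk u
  | one => rfl
  | atom _ => Pomset.seq_eps (Pomset.atom _)
  | seq u v => by
    rw [seqFactors, Pomset.seqProd_append, seqProd_seqFactors u, seqProd_seqFactors v,
      Pomset.mk_seq]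
  | par u v => by
    by_cases hu : u.seqFactors = []
    · simp [hu, mk_eq_eps_of_seqFactors_eq_nil hu, seqProd_seqFactors v]
    by_cases hv : v.seqFactors = []
    · simp [hv, mk_eq_eps_of_seqFactors_eq_nil hv, seqProd_seqFactors u]
    · simp [hu, hv]

theorem seqFactors_eq_singleton_of_mem :
    ∀ {u : SPTerm B} {X : Pomset B}, X ∈ u.seqFactors → Pomset.seqFactors X = [X]
  | one, _, h => nomatch h
  | atom _, _, h => by rw [List.mem_singleton.mp h]; rfl
  | seq u v, _, h => (List.mem_append.mp h).elim seqFactors_eq_singleton_of_mem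
      seqFactors_eq_singleton_of_mem
  | par u v, X, h => by
    by_cases hu : u.seqFactors = []
    · exact seqFactors_eq_singleton_of_mem (by simpa [hu] using h)
    by_cases hv : v.seqFactors = []
    · exact seqFactors_eq_singleton_of_mem (by simpa [hv] using h)
    · rw [seqFactors_par_of_ne_nil hu hv, List.mem_singleton] at h
      subst h
      exact seqFactors_par_of_ne_nil hu hv

end SPTerm

namespace Pomset

variable {B : Type}

@[simp] theorem seqFactors_eps : (eps : Pomset B).seqFactors = [] := rfl

@[simp] theorem seqFactors_seq (U V : Pomset B) :
    (U.seq V).seqFactors = U.seqFactors ++ V.seqFactors := by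
  induction U using Quotient.inductionOn
  induction V using Quotient.inductionOn
  rfl

theorem seqProd_seqFactors (U : Pomset B) : seqProd U.seqFactors = U := by
  induction U using Quotient.inductionOn with
  | _ u => exact u.seqProd_seqFactors

theorem seqFactors_eq_singleton_of_mem {U X : Pomset B} (h : X ∈ U.seqFactors) :
    X.seqFactors = [X] := by
  induction U using Quotient.inductionOn with
  | _ u => exact SPTerm.seqFactors_eq_singleton_of_mem h

theorem ne_eps_of_mem_seqFactors {U X : Pomset B} (h : X ∈ U.seqFactors) : X ≠ eps := by
  intro hX
  simpa [hX] using seqFactors_eq_singleton_of_mem h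

theorem SeqPrime.seqFactors_eq {U : Pomset B} (hU : U.SeqPrime) : U.seqFactors = [U] := by
  obtain ⟨hne, hprime⟩ := hU
  have hprod := seqProd_seqFactors U
  rcases hfac : U.seqFactors with _ | ⟨X, _ | ⟨Y, l⟩⟩ <;> rw [hfac] at hprod
  · exact absurd hprod.symm hne
  · simpa using hprod
  · have hX : X ≠ eps := ne_eps_of_mem_seqFactors (U := U) (by simp [hfac])
    have hY : Y.seqFactors = [Y] := seqFactors_eq_singleton_of_mem (U := U) (by simp [hfac])
    have hrest := (hprime X (seqProd (Y :: l)) hprod.symm).resolve_left hX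
    simpa [hY] using congrArg seqFactors hrest

end Pomset

theorem forall₂_seqFactors_of_mem_substWord {A B : Type} {ζ : A → Set (Pomset B)}
    (hprime : ∀ a, ∀ V ∈ ζ a, V.SeqPrime) :
    ∀ {w : List A} {U : Pomset B}, U ∈ substWord ζ w →
      List.Forall₂ (fun a V => V ∈ ζ a) w U.seqFactors
  | [], _, rfl => .nil
  | a :: _, _, ⟨V, hV, _, hW, rfl⟩ => by
    rw [Pomset.seqFactors_seq, (hprime a V hV).seqFactors_eq]
    exact .cons hV (forall₂_seqFactors_of_mem_substWord hprime hW)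

/-- For an atomic substitution, every sp-pomset is in the image of at most one
word. -/
theorem atomic_substitution_unique_word {A B : Type} (ζ : A → Set (Pomset B))
    (hζ : Atomic ζ) (U : Pomset B) (w w' : List A)
    (hw : U ∈ substWord ζ w) (hw' : U ∈ substWord ζ w') : w = w' := by
  have hunique : Relator.LeftUnique fun (a : A) (V : Pomset B) => V ∈ ζ a :=
    fun a b V ha hb => (hζ.2 a b).mp ⟨V, ha, hb⟩
  exact List.left_unique_forall₂' hunique (forall₂_seqFactors_of_mem_substWord hζ.1 hw)
    (forall₂_seqFactors_of_mem_substWord hζ.1 hw')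

end WBKA
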